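/- Let R be monotone with ν(R(∅)) = 0 and satisfying the Fatou property, and 0 < p < ∞. Then R is a measure preserving transformation (μ(E) = ν(R(E)) for all E ∈ Σ_X) if and only if for all measurable f, ∫_X |f|^p dμ = ∫_Y (f*_R)^p dν; i.e. Λ^p_R(1) = L^p(X) with equality of norms. -/

import Mathlib

open MeasureTheory Set Filter
open scoped ENNReal NNReal

/-! Both integrals are computed by the layer-cake formula. The superlevel set `{f*_R > s}` is
exactly `R {|f| > s}`: a point lies in it iff it lies in `R {|f| > t}` for some `t > s`, by
monotonicity of `R` and its continuity along increasing unions. So if `R` preserves measure, `|f|`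
and `f*_R` are equimeasurable. Conversely, off the null set `R ∅` the rearrangement of `1_E` is
`1_{R E}`, and the two integrals of `1_E` are `μ E` and `ν (R E)`. -/

/-- The rearrangement of `f` with respect to the set transformation `R`. -/
noncomputable def rearr {X Y : Type*} (R : Set X → Set Y) (f : X → ℝ) (y : Y) : ℝ≥0∞ :=
  ∫⁻ t in Set.Ioi (0 : ℝ), (R {x | t < |f x|}).indicator (fun _ => (1 : ℝ≥0∞)) y

theorem volume_setOf_ofReal_lt_inter_Ioi (a : ℝ≥0∞) :
    volume ({t : ℝ | ENNReal.ofReal t < a} ∩ Ioi 0) = a := by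
  rcases eq_or_ne a ∞ with rfl | ha
  · simp [Real.volume_Ioi]
  · have : {t : ℝ | ENNReal.ofReal t < a} ∩ Ioi 0 = Ioo 0 a.toReal := by
      ext t
      simp only [mem_inter_iff, mem_ofPred_eq, mem_Ioi, mem_Ioo]
      exact ⟨fun h => ⟨h.2, (ENNReal.ofReal_lt_iff_lt_toReal h.2.le ha).1 h.1⟩,
        fun h => ⟨(ENNReal.ofReal_lt_iff_lt_toReal h.1.le ha).2 h.2, h.1⟩⟩
    rw [this, Real.volume_Ioo, sub_zero, ENNReal.ofReal_toReal ha]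

theorem lintegral_eq_lintegral_meas_ofReal_lt {α : Type*} [MeasurableSpace α] (μ : Measure α)
    [SFinite μ] {g : α → ℝ≥0∞} (hg : Measurable g) :
    ∫⁻ x, g x ∂μ = ∫⁻ t in Ioi 0, μ {x | ENNReal.ofReal t < g x} := by
  let F : α → ℝ → ℝ≥0∞ := fun x t => {t | ENNReal.ofReal t < g x}.indicator 1 t
  have hF : Measurable (Function.uncurry F) :=
    measurable_const.indicator <|
      measurableSet_lt (ENNReal.measurable_ofReal.comp measurable_snd) (hg.comp measurable_fst)
  calc ∫⁻ x, g x ∂μ = ∫⁻ x, (∫⁻ t in Ioi (0 : ℝ), F x t) ∂μ := by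
        refine lintegral_congr fun x => ?_
        rw [lintegral_indicator_one (measurableSet_lt ENNReal.measurable_ofReal measurable_const),
          Measure.restrict_apply' measurableSet_Ioi, volume_setOf_ofReal_lt_inter_Ioi]
    _ = ∫⁻ t in Ioi 0, ∫⁻ x, F x t ∂μ := lintegral_lintegral_swap hF.aemeasurable
    _ = ∫⁻ t in Ioi 0, μ {x | ENNReal.ofReal t < g x} := by
        refine lintegral_congr fun t => ?_
        exact lintegral_indicator_one (measurableSet_lt measurable_const hg)

theorem lintegral_rpow_eq_of_meas_lt_eq {α β : Type*} [MeasurableSpace α] [MeasurableSpace β]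
    {μ : Measure α} {ν : Measure β} [SFinite μ] [SFinite ν] {g : α → ℝ≥0∞} {h : β → ℝ≥0∞}
    (hg : Measurable g) (hh : Measurable h)
    (hgh : ∀ t : ℝ, 0 < t → μ {x | ENNReal.ofReal t < g x} = ν {y | ENNReal.ofReal t < h y})
    {p : ℝ} (hp : 0 < p) :
    ∫⁻ x, g x ^ p ∂μ = ∫⁻ y, h y ^ p ∂ν := by
  have hpow : ∀ {t : ℝ} {a : ℝ≥0∞}, 0 < t →
      (ENNReal.ofReal t < a ^ p ↔ ENNReal.ofReal (t ^ p⁻¹) < a) := fun ht => by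
    rw [← ENNReal.rpow_inv_lt_iff hp, ENNReal.ofReal_rpow_of_pos ht]
  rw [lintegral_eq_lintegral_meas_ofReal_lt μ (hg.pow_const p),
    lintegral_eq_lintegral_meas_ofReal_lt ν (hh.pow_const p)]
  refine setLIntegral_congr_fun measurableSet_Ioi fun t (ht : 0 < t) => ?_
  simp only [hpow ht]
  exact hgh _ (Real.rpow_pos_of_pos ht _)

theorem ofReal_lt_setLIntegral_indicator_iff {S : Set ℝ} (hS : IsLowerSet S) {s : ℝ}
    (hs : 0 ≤ s) :
    ENNReal.ofReal s < ∫⁻ t in Ioi 0, S.indicator 1 t ↔ ∃ t, s < t ∧ t ∈ S := by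
  rw [lintegral_indicator_one hS.ordConnected.measurableSet,
    Measure.restrict_apply' measurableSet_Ioi]
  constructor
  · intro h
    by_contra! hS'
    refine h.not_ge ?_
    calc volume (S ∩ Ioi 0) ≤ volume (Ioc 0 s) :=
          measure_mono fun t ht => ⟨ht.2, not_lt.1 fun hst => hS' t hst ht.1⟩
      _ = ENNReal.ofReal s := by rw [Real.volume_Ioc, sub_zero]
  · rintro ⟨t, hst, ht⟩
    calc ENNReal.ofReal s < ENNReal.ofReal t :=
          ENNReal.ofReal_lt_ofReal_iff'.2 ⟨hst, hs.trans_lt hst⟩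
      _ = volume (Ioc 0 t) := by rw [Real.volume_Ioc, sub_zero]
      _ ≤ volume (S ∩ Ioi 0) := measure_mono fun u hu => ⟨hS hu.2 ht, hu.1⟩

theorem indicator_one_rpow {α : Type*} {s : Set α} {p : ℝ} (hp : 0 < p) (x : α) :
    s.indicator (1 : α → ℝ≥0∞) x ^ p = s.indicator 1 x := by
  by_cases hx : x ∈ s <;> simp [hx, hp]

section SetTransformation

variable {X Y : Type*} {R : Set X → Set Y}

theorem mem_superlevel_iff_exists_gt (hRmono : ∀ E F : Set X, E ⊆ F → R E ⊆ R F)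
    (hRunion : ∀ A : ℕ → Set X, Monotone A → R (⋃ j, A j) = ⋃ j, R (A j))
    (f : X → ℝ) (s : ℝ) (y : Y) :
    y ∈ R {x | s < f x} ↔ ∃ t, s < t ∧ y ∈ R {x | t < f x} := by
  constructor
  · intro hy
    have hA : Monotone fun n : ℕ => {x | s + 1 / (n + 1) < f x} := fun n m hnm x hx =>
      lt_of_le_of_lt (add_le_add_right (Nat.one_div_le_one_div hnm) s) hx
    have hU : ⋃ n : ℕ, {x | s + 1 / (n + 1) < f x} = {x | s < f x} := by
      ext x
      simp only [mem_iUnion, mem_ofPred_eq]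
      refine ⟨fun ⟨n, hn⟩ => lt_trans (lt_add_of_pos_right s Nat.one_div_pos_of_nat) hn,
        fun hx => ?_⟩
      obtain ⟨n, hn⟩ := exists_nat_one_div_lt (sub_pos.2 hx)
      exact ⟨n, by linarith⟩
    rw [← hU, hRunion _ hA, mem_iUnion] at hy
    obtain ⟨n, hn⟩ := hy
    exact ⟨_, lt_add_of_pos_right s Nat.one_div_pos_of_nat, hn⟩
  · rintro ⟨t, hst, ht⟩
    exact hRmono _ _ (fun x hx => hst.trans hx) ht

theorem setOf_ofReal_lt_rearr (hRmono : ∀ E F : Set X, E ⊆ F → R E ⊆ R F)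
    (hRunion : ∀ A : ℕ → Set X, Monotone A → R (⋃ j, A j) = ⋃ j, R (A j))
    (f : X → ℝ) {s : ℝ} (hs : 0 ≤ s) :
    {y | ENNReal.ofReal s < rearr R f y} = R {x | s < |f x|} := by
  ext y
  have hS : IsLowerSet {t | y ∈ R {x | t < |f x|}} := fun a b hba ha =>
    hRmono _ _ (fun x hx => lt_of_le_of_lt hba hx) ha
  exact (ofReal_lt_setLIntegral_indicator_iff hS hs).trans
    (mem_superlevel_iff_exists_gt hRmono hRunion _ s y).symm

theorem measurable_rearr [MeasurableSpace X] [MeasurableSpace Y]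
    (hRmono : ∀ E F : Set X, E ⊆ F → R E ⊆ R F)
    (hRmeas : ∀ A : Set X, MeasurableSet A → MeasurableSet (R A))
    (hRunion : ∀ A : ℕ → Set X, Monotone A → R (⋃ j, A j) = ⋃ j, R (A j))
    {f : X → ℝ} (hf : Measurable f) :
    Measurable (rearr R f) := by
  refine measurable_of_Ioi fun a => ?_
  rcases eq_or_ne a ∞ with rfl | ha
  · simp only [Ioi_top, preimage_empty, MeasurableSet.empty]
  · have : rearr R f ⁻¹' Ioi a = R {x | a.toReal < |f x|} := by
      rw [← setOf_ofReal_lt_rearr hRmono hRunion f ENNReal.toReal_nonneg, ENNReal.ofReal_toReal ha]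
      rfl
    exact this ▸ hRmeas _ (measurableSet_lt measurable_const hf.abs)

theorem rearr_indicator_one {y : Y} (hy : y ∉ R ∅) (E : Set X) :
    rearr R (E.indicator 1) y = (R E).indicator 1 y := by
  have hlevel : ∀ t : ℝ, 0 < t →
      (R {x | t < |E.indicator (1 : X → ℝ) x|}).indicator (fun _ => (1 : ℝ≥0∞)) y =
        (Iio 1).indicator (fun _ => (R E).indicator 1 y) t := by
    intro t ht
    by_cases ht1 : t < 1
    · have : {x | t < |E.indicator (1 : X → ℝ) x|} = E := by
        ext x; by_cases hx : x ∈ E <;> simp [hx, ht1, ht.le]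
      rw [this, indicator_of_mem (show t ∈ Iio 1 from ht1)]
      rfl
    · have : {x | t < |E.indicator (1 : X → ℝ) x|} = ∅ := by
        ext x; by_cases hx : x ∈ E <;> simp [hx, not_lt.1 ht1, ht.le]
      simp [this, ht1, hy]
  rw [rearr, setLIntegral_congr_fun measurableSet_Ioi hlevel,
    lintegral_indicator_const measurableSet_Iio, Measure.restrict_apply measurableSet_Iio,
    Iio_inter_Ioi, Real.volume_Ioo, sub_zero, ENNReal.ofReal_one, mul_one]

end SetTransformation

theorem stmt15 {X Y : Type*} [MeasurableSpace X] [MeasurableSpace Y]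
    (μ : Measure X) (ν : Measure Y) [SigmaFinite μ] [SigmaFinite ν]
    (R : Set X → Set Y)
    (hRmono : ∀ E F : Set X, E ⊆ F → R E ⊆ R F) (hR0 : ν (R ∅) = 0)
    (hRmeas : ∀ A : Set X, MeasurableSet A → MeasurableSet (R A))
    (hRunion : ∀ A : ℕ → Set X, Monotone A → R (⋃ j, A j) = ⋃ j, R (A j))
    (p : ℝ) (hp : 0 < p) :
    (∀ E : Set X, MeasurableSet E → ν (R E) = μ E) ↔
      (∀ f : X → ℝ, Measurable f →
        ∫⁻ x, ENNReal.ofReal |f x| ^ p ∂μ = ∫⁻ y, rearr R f y ^ p ∂ν) := by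
  constructor
  · intro hR f hf
    refine lintegral_rpow_eq_of_meas_lt_eq hf.abs.ennreal_ofReal
      (measurable_rearr hRmono hRmeas hRunion hf) (fun t ht => ?_) hp
    simp only [ENNReal.ofReal_lt_ofReal_iff_of_nonneg ht.le]
    rw [setOf_ofReal_lt_rearr hRmono hRunion f ht.le,
      hR _ (measurableSet_lt measurable_const hf.abs)]
  · intro h E hE
    calc ν (R E) = ∫⁻ y, rearr R (E.indicator 1) y ^ p ∂ν := by
          rw [← lintegral_indicator_one (hRmeas E hE)]
          refine lintegral_congr_ae ?_
          filter_upwards [measure_eq_zero_iff_ae_notMem.1 hR0] with y hy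
          rw [rearr_indicator_one hy, indicator_one_rpow hp]
      _ = ∫⁻ x, ENNReal.ofReal |E.indicator 1 x| ^ p ∂μ :=
          (h _ (measurable_one.indicator hE)).symm
      _ = μ E := by
          rw [← lintegral_indicator_one hE]
          refine lintegral_congr fun x => ?_
          by_cases hx : x ∈ E <;> simp [hx, hp]
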